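/- arXiv:quant-ph/0504194 — 3 statements merged into one kernel-verified Lean document; each statement's English description precedes it below -/
import Mathlib

section
/- For every Boolean function B : {0,1,…,N−1} → {0,1}, the function f_B is twice continuously differentiable on [0,1] (including matching one-sided derivatives up to order two at each point x_j), and ‖f_B‖∞ ≤ ‖h‖∞/(4N²). -/
/-- The supremum norm of a real function over the interval `[0,1]`. -/
noncomputable def supNorm (f : ℝ → ℝ) : ℝ := ⨆ x : Set.Icc (0:ℝ) 1, |f x|

/-- The class `F_M` of twice continuously differentiable functions `f : [0,1] → ℝ`
with `‖f‖∞ ≤ M`, `‖f′‖∞ ≤ M` and `‖f″‖∞ ≤ M`. -/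
def memF (M : ℝ) (f : ℝ → ℝ) : Prop :=
  ContDiffOn ℝ 2 f (Set.Icc 0 1) ∧
  supNorm f ≤ M ∧
  supNorm (derivWithin f (Set.Icc 0 1)) ≤ M ∧
  supNorm (derivWithin (derivWithin f (Set.Icc 0 1)) (Set.Icc 0 1)) ≤ M

/-- The extension of `h` by zero outside `[0,1]`: `H(x) = h(x)` on `[0,1]`, else `0`. -/
noncomputable def Hext (h : ℝ → ℝ) : ℝ → ℝ :=
  fun x => if x ∈ Set.Icc (0:ℝ) 1 then h x else 0

/-- The subdivision points `x_j = 1/4 + j/(2N)` of the interval `[1/4, 3/4]`. -/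
noncomputable def xnode (N j : ℕ) : ℝ := 1/4 + (j : ℝ) / (2 * N)

/-- The bump `h_j(x) = H(2N(x − x_j))/(4N²)`. -/
noncomputable def hjfun (h : ℝ → ℝ) (N j : ℕ) : ℝ → ℝ :=
  fun x => Hext h (2 * N * (x - xnode N j)) / (4 * N ^ 2)

/-- The function `f_B` associated with a Boolean function `B` on `{0,…,N−1}`:
`f_B(x) = h_j(x)·B(j)/(2 sin²(πx))` on `[x_j, x_{j+1}]` and `f_B(x) = 0` on
`[0,1/4] ∪ [3/4,1]`.  Since the `h_j` are supported in the pairwise disjoint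
open intervals `(x_j, x_{j+1}) ⊆ (1/4, 3/4)`, this is equivalently given by the
sum below. -/
noncomputable def fB (h : ℝ → ℝ) (N : ℕ) (B : ℕ → ℕ) : ℝ → ℝ :=
  fun x => ∑ j ∈ Finset.range N,
    hjfun h N j x * (B j : ℝ) / (2 * (Real.sin (Real.pi * x)) ^ 2)

open Set Real

lemma Hext_of_not_mem {g : ℝ → ℝ} {x : ℝ} (hx : x ∉ Set.Icc (0:ℝ) 1) : Hext g x = 0 :=
  if_neg hx

lemma Hext_of_mem {g : ℝ → ℝ} {x : ℝ} (hx : x ∈ Set.Icc (0:ℝ) 1) : Hext g x = g x :=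
  if_pos hx

lemma Hext_hasDerivAt (g g' : ℝ → ℝ)
    (hder : ∀ x ∈ Set.Icc (0:ℝ) 1, HasDerivWithinAt g (g' x) (Set.Icc 0 1) x)
    (hg0 : g 0 = 0) (hg1 : g 1 = 0) (hg'0 : g' 0 = 0) (hg'1 : g' 1 = 0) :
    ∀ x, HasDerivAt (Hext g) (Hext g' x) x := by
  intro x
  have hIic0 : ∀ y ∈ Set.Iic (0:ℝ), Hext g y = 0 := by
    intro y hy
    by_cases hmem : y ∈ Set.Icc (0:ℝ) 1
    · have : y = 0 := le_antisymm hy hmem.1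
      rw [Hext_of_mem hmem, this, hg0]
    · exact Hext_of_not_mem hmem
  have hIci1 : ∀ y ∈ Set.Ici (1:ℝ), Hext g y = 0 := by
    intro y hy
    by_cases hmem : y ∈ Set.Icc (0:ℝ) 1
    · have : y = 1 := le_antisymm hmem.2 hy
      rw [Hext_of_mem hmem, this, hg1]
    · exact Hext_of_not_mem hmem
  rcases lt_trichotomy x 0 with hx | rfl | hx
  · -- x < 0
    have hmem : x ∉ Set.Icc (0:ℝ) 1 := fun hm => absurd hm.1 (not_le.mpr hx)
    rw [Hext_of_not_mem hmem]
    refine (hasDerivAt_const x (0:ℝ)).congr_of_eventuallyEq ?_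
    filter_upwards [Iio_mem_nhds hx] with y hy
    exact hIic0 y (Set.mem_Iic.mpr hy.le)
  · -- x = 0
    have hleft : HasDerivWithinAt (Hext g) 0 (Set.Iic 0) 0 :=
      (hasDerivWithinAt_const 0 _ (0:ℝ)).congr hIic0 (hIic0 0 (Set.mem_Iic.mpr le_rfl))
    have hmem0 : (0:ℝ) ∈ Set.Icc (0:ℝ) 1 := ⟨le_rfl, zero_le_one⟩
    have hright : HasDerivWithinAt (Hext g) 0 (Set.Ici 0) 0 := by
      have h1 : HasDerivWithinAt (Hext g) (g' 0) (Set.Icc 0 1) 0 :=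
        (hder 0 hmem0).congr (fun y hy => Hext_of_mem hy) (Hext_of_mem hmem0)
      rw [hg'0] at h1
      refine h1.mono_of_mem_nhdsWithin ?_
      have := inter_mem_nhdsWithin (Set.Ici (0:ℝ)) (Iic_mem_nhds (zero_lt_one))
      rwa [Set.Ici_inter_Iic] at this
    have := (hleft.union hright)
    rw [Set.Iic_union_Ici, hasDerivWithinAt_univ] at this
    rwa [Hext_of_mem hmem0, hg'0]
  rcases lt_trichotomy x 1 with hx1 | rfl | hx1
  · -- 0 < x < 1
    have hmem : x ∈ Set.Icc (0:ℝ) 1 := ⟨le_of_lt hx, le_of_lt hx1⟩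
    have hnb : Set.Icc (0:ℝ) 1 ∈ nhds x := Icc_mem_nhds hx hx1
    have h1 : HasDerivAt g (g' x) x := (hder x hmem).hasDerivAt hnb
    rw [Hext_of_mem hmem]
    refine h1.congr_of_eventuallyEq ?_
    filter_upwards [hnb] with y hy
    exact Hext_of_mem hy
  · -- x = 1
    have hmem1 : (1:ℝ) ∈ Set.Icc (0:ℝ) 1 := ⟨zero_le_one, le_rfl⟩
    have hright : HasDerivWithinAt (Hext g) 0 (Set.Ici 1) 1 :=
      (hasDerivWithinAt_const 1 _ (0:ℝ)).congr hIci1 (hIci1 1 (Set.mem_Ici.mpr le_rfl))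
    have hleft : HasDerivWithinAt (Hext g) 0 (Set.Iic 1) 1 := by
      have h1 : HasDerivWithinAt (Hext g) (g' 1) (Set.Icc 0 1) 1 :=
        (hder 1 hmem1).congr (fun y hy => Hext_of_mem hy) (Hext_of_mem hmem1)
      rw [hg'1] at h1
      refine h1.mono_of_mem_nhdsWithin ?_
      have := inter_mem_nhdsWithin (Set.Iic (1:ℝ)) (Ici_mem_nhds (zero_lt_one))
      rwa [Set.Iic_inter_Ici] at this
    have := (hleft.union hright)
    rw [Set.Iic_union_Ici, hasDerivWithinAt_univ] at this
    rwa [Hext_of_mem hmem1, hg'1]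
  · -- 1 < x
    have hmem : x ∉ Set.Icc (0:ℝ) 1 := fun hm => absurd hm.2 (not_le.mpr hx1)
    rw [Hext_of_not_mem hmem]
    refine (hasDerivAt_const x (0:ℝ)).congr_of_eventuallyEq ?_
    filter_upwards [Ioi_mem_nhds hx1] with y hy
    exact hIci1 y (Set.mem_Ici.mpr hy.le)

lemma Hext_continuous (g : ℝ → ℝ) (hg : ContinuousOn g (Set.Icc 0 1))
    (hg0 : g 0 = 0) (hg1 : g 1 = 0) : Continuous (Hext g) := by
  have : Hext g = Set.piecewise (Set.Icc (0:ℝ) 1) g (fun _ => 0) := by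
    funext x
    by_cases hx : x ∈ Set.Icc (0:ℝ) 1 <;> simp [Hext, Set.piecewise, hx]
  rw [this]
  refine continuous_piecewise ?_ ?_ continuousOn_const
  · intro a ha
    rw [frontier_Icc zero_le_one] at ha
    rcases ha with rfl | rfl
    · exact hg0
    · exact hg1
  · rwa [isClosed_Icc.closure_eq]

lemma Hext_contDiff (h : ℝ → ℝ) (hh : ContDiffOn ℝ 2 h (Set.Icc 0 1))
    (h0 : h 0 = 0) (h1 : h 1 = 0)
    (hd0 : derivWithin h (Set.Icc 0 1) 0 = 0)
    (hd1 : derivWithin h (Set.Icc 0 1) 1 = 0)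
    (hdd0 : derivWithin (derivWithin h (Set.Icc 0 1)) (Set.Icc 0 1) 0 = 0)
    (hdd1 : derivWithin (derivWithin h (Set.Icc 0 1)) (Set.Icc 0 1) 1 = 0) :
    ContDiff ℝ 2 (Hext h) := by
  have hu : UniqueDiffOn ℝ (Set.Icc (0:ℝ) 1) := uniqueDiffOn_Icc zero_lt_one
  set g1 := derivWithin h (Set.Icc (0:ℝ) 1) with hg1
  set g2 := derivWithin g1 (Set.Icc (0:ℝ) 1) with hg2
  have hh1 : ContDiffOn ℝ 1 g1 (Set.Icc 0 1) := hh.derivWithin hu (by norm_num)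
  have hh2 : ContDiffOn ℝ 0 g2 (Set.Icc 0 1) := hh1.derivWithin hu (by norm_num)
  have hder : ∀ x ∈ Set.Icc (0:ℝ) 1, HasDerivWithinAt h (g1 x) (Set.Icc 0 1) x :=
    fun x hx => ((hh.differentiableOn two_ne_zero) x hx).hasDerivWithinAt
  have hder1 : ∀ x ∈ Set.Icc (0:ℝ) 1, HasDerivWithinAt g1 (g2 x) (Set.Icc 0 1) x :=
    fun x hx => ((hh1.differentiableOn one_ne_zero) x hx).hasDerivWithinAt
  have HA : ∀ x, HasDerivAt (Hext h) (Hext g1 x) x :=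
    Hext_hasDerivAt h g1 hder h0 h1 hd0 hd1
  have HB : ∀ x, HasDerivAt (Hext g1) (Hext g2 x) x :=
    Hext_hasDerivAt g1 g2 hder1 hd0 hd1 hdd0 hdd1
  have HC : Continuous (Hext g2) := Hext_continuous g2 hh2.continuousOn hdd0 hdd1
  have hda : deriv (Hext h) = Hext g1 := funext fun x => (HA x).deriv
  have hdb : deriv (Hext g1) = Hext g2 := funext fun x => (HB x).deriv
  have h2eq : (2 : WithTop ℕ∞) = 1 + 1 := by norm_num
  rw [h2eq, contDiff_succ_iff_deriv]
  refine ⟨fun x => (HA x).differentiableAt, by simp, ?_⟩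
  rw [hda, contDiff_one_iff_deriv, hdb]
  exact ⟨fun x => (HB x).differentiableAt, HC⟩

lemma hjfun_pos_of_ne (h : ℝ → ℝ) (h0 : h 0 = 0) (h1 : h 1 = 0) {N j : ℕ} {x : ℝ}
    (hne : hjfun h N j x ≠ 0) :
    0 < 2 * (N:ℝ) * (x - xnode N j) ∧ 2 * (N:ℝ) * (x - xnode N j) < 1 := by
  have hH : Hext h (2 * (N:ℝ) * (x - xnode N j)) ≠ 0 := by
    intro e
    apply hne
    simp only [hjfun, e, zero_div]
  have hmem : 2 * (N:ℝ) * (x - xnode N j) ∈ Set.Icc (0:ℝ) 1 := by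
    by_contra hm
    exact hH (Hext_of_not_mem hm)
  have ht0 : 2 * (N:ℝ) * (x - xnode N j) ≠ 0 :=
    fun e => hH (by rw [Hext_of_mem hmem, e, h0])
  have ht1 : 2 * (N:ℝ) * (x - xnode N j) ≠ 1 :=
    fun e => hH (by rw [Hext_of_mem hmem, e, h1])
  exact ⟨lt_of_le_of_ne hmem.1 (Ne.symm ht0), lt_of_le_of_ne hmem.2 ht1⟩

lemma hjfun_support (h : ℝ → ℝ) (h0 : h 0 = 0) (h1 : h 1 = 0) {N j : ℕ} {x : ℝ}
    (hN : 0 < N) (hj : j < N) (hne : hjfun h N j x ≠ 0) : 1/4 < x ∧ x < 3/4 := by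
  obtain ⟨hl, hr⟩ := hjfun_pos_of_ne h h0 h1 hne
  have hNpos : (0:ℝ) < N := Nat.cast_pos.mpr hN
  have key : 2 * (N:ℝ) * (x - xnode N j) = 2*(N:ℝ)*x - (N:ℝ)/2 - (j:ℝ) := by
    rw [xnode]; field_simp; ring
  rw [key] at hl hr
  have hjN : (j:ℝ) + 1 ≤ (N:ℝ) := by exact_mod_cast hj
  have hj0 : (0:ℝ) ≤ (j:ℝ) := Nat.cast_nonneg j
  constructor <;> nlinarith

lemma hjfun_disjoint (h : ℝ → ℝ) (h0 : h 0 = 0) (h1 : h 1 = 0) {N j j' : ℕ} {x : ℝ}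
    (hjj : j < j') (hne : hjfun h N j x ≠ 0) (hne' : hjfun h N j' x ≠ 0) : False := by
  obtain ⟨hl, hr⟩ := hjfun_pos_of_ne h h0 h1 hne
  obtain ⟨hl', hr'⟩ := hjfun_pos_of_ne h h0 h1 hne'
  by_cases hN : (N:ℝ) = 0
  · rw [hN] at hl; norm_num at hl
  have hdiff : 2*(N:ℝ)*(x - xnode N j) - 2*(N:ℝ)*(x - xnode N j') = (j':ℝ) - (j:ℝ) := by
    rw [xnode, xnode]; field_simp; ring
  have hjj' : (j:ℝ) + 1 ≤ (j':ℝ) := by exact_mod_cast hjj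
  linarith
/-- For every Boolean function `B : {0,…,N−1} → {0,1}`, the function `f_B` is twice
continuously differentiable on `[0,1]` and `‖f_B‖∞ ≤ ‖h‖∞/(4N²)`. -/
theorem fB_smooth_and_bounded
    (h : ℝ → ℝ) (hh : ContDiffOn ℝ 2 h (Set.Icc 0 1))
    (h0 : h 0 = 0) (h1 : h 1 = 0)
    (hd0 : derivWithin h (Set.Icc 0 1) 0 = 0)
    (hd1 : derivWithin h (Set.Icc 0 1) 1 = 0)
    (hdd0 : derivWithin (derivWithin h (Set.Icc 0 1)) (Set.Icc 0 1) 0 = 0)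
    (hdd1 : derivWithin (derivWithin h (Set.Icc 0 1)) (Set.Icc 0 1) 1 = 0)
    (hInt : 0 < ∫ x in (0:ℝ)..1, h x)
    (N : ℕ) (hN : 0 < N) (B : ℕ → ℕ) (hB : ∀ j < N, B j ≤ 1) :
    ContDiffOn ℝ 2 (fB h N B) (Set.Icc 0 1) ∧
    supNorm (fB h N B) ≤ supNorm h / (4 * N ^ 2) := by
  have hNpos : (0:ℝ) < N := Nat.cast_pos.mpr hN
  have HC2 : ContDiff ℝ 2 (Hext h) := Hext_contDiff h hh h0 h1 hd0 hd1 hdd0 hdd1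
  have heq : fB h N B = fun x => (∑ j ∈ Finset.range N, hjfun h N j x * (B j : ℝ)) /
      (2 * (Real.sin (Real.pi * x)) ^ 2) := by
    funext x; rw [fB, ← Finset.sum_div]
  have hzero : ∀ x : ℝ, x ≤ 1/4 ∨ 3/4 ≤ x →
      (∑ j ∈ Finset.range N, hjfun h N j x * (B j : ℝ)) = 0 := by
    intro x hx
    refine Finset.sum_eq_zero fun j hj => ?_
    have hjN := Finset.mem_range.mp hj
    have hz : hjfun h N j x = 0 := by
      by_contra hne
      obtain ⟨ha, hb⟩ := hjfun_support h h0 h1 hN hjN hne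
      rcases hx with hx | hx <;> linarith
    rw [hz, zero_mul]
  -- bounds
  obtain ⟨C, hC⟩ := isCompact_Icc.exists_bound_of_continuousOn hh.continuousOn
  have hbdd : BddAbove (Set.range fun x : Set.Icc (0:ℝ) 1 => |h x|) := by
    refine ⟨C, ?_⟩
    rintro _ ⟨y, rfl⟩
    simpa [Real.norm_eq_abs] using hC y y.2
  have hM : ∀ t ∈ Set.Icc (0:ℝ) 1, |h t| ≤ supNorm h := fun t ht =>
    le_ciSup hbdd (⟨t, ht⟩ : Set.Icc (0:ℝ) 1)
  have hM0 : 0 ≤ supNorm h :=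
    le_trans (abs_nonneg _) (hM 0 (by norm_num))
  have hHb : ∀ t : ℝ, |Hext h t| ≤ supNorm h := by
    intro t
    by_cases ht : t ∈ Set.Icc (0:ℝ) 1
    · rw [Hext_of_mem ht]; exact hM t ht
    · rw [Hext_of_not_mem ht, abs_zero]; exact hM0
  have hN2 : (0:ℝ) < 4 * (N:ℝ)^2 := by positivity
  have hjb : ∀ j (x : ℝ), |hjfun h N j x| ≤ supNorm h / (4 * (N:ℝ)^2) := by
    intro j x
    have hre : hjfun h N j x = Hext h (2 * (N:ℝ) * (x - xnode N j)) / (4 * (N:ℝ) ^ 2) := rfl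
    rw [hre, abs_div, abs_of_pos hN2]
    gcongr
    exact hHb _
  have hcnonneg : (0:ℝ) ≤ supNorm h / (4 * (N:ℝ)^2) := div_nonneg hM0 hN2.le
  -- pointwise bound
  have hpt : ∀ x ∈ Set.Icc (0:ℝ) 1,
      |(∑ j ∈ Finset.range N, hjfun h N j x * (B j : ℝ)) /
        (2 * (Real.sin (Real.pi * x)) ^ 2)| ≤ supNorm h / (4 * (N:ℝ)^2) := by
    intro x hx
    rcases le_or_gt x (1/4) with hle | hgt
    · rw [hzero x (Or.inl hle), zero_div, abs_zero]; exact hcnonneg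
    rcases le_or_gt (3/4 : ℝ) x with hge | hlt
    · rw [hzero x (Or.inr hge), zero_div, abs_zero]; exact hcnonneg
    have hsin : 1 ≤ 2 * (Real.sin (Real.pi * x))^2 := by
      have hid : 2 * Real.sin (Real.pi * x) ^ 2 = 1 - Real.cos (2 * (Real.pi * x)) := by
        have hc2 := Real.cos_two_mul (Real.pi * x)
        have hs := Real.sin_sq_add_cos_sq (Real.pi * x)
        nlinarith
      rw [hid]
      have hcos : Real.cos (2 * (Real.pi * x)) ≤ 0 := by
        apply Real.cos_nonpos_of_pi_div_two_le_of_le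
        · nlinarith [Real.pi_pos, mul_pos Real.pi_pos (show (0:ℝ) < x - 1/4 by linarith)]
        · nlinarith [Real.pi_pos, mul_pos Real.pi_pos (show (0:ℝ) < 3/4 - x by linarith)]
      linarith
    have hSb : |∑ j ∈ Finset.range N, hjfun h N j x * (B j : ℝ)| ≤
        supNorm h / (4*(N:ℝ)^2) := by
      by_cases hall : ∀ j ∈ Finset.range N, hjfun h N j x * (B j : ℝ) = 0
      · rw [Finset.sum_eq_zero hall, abs_zero]; exact hcnonneg
      · push_neg at hall
        obtain ⟨j0, hj0mem, hj0ne⟩ := hall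
        have hjfne : hjfun h N j0 x ≠ 0 := fun e => hj0ne (by rw [e, zero_mul])
        have hsum : (∑ j ∈ Finset.range N, hjfun h N j x * (B j : ℝ)) =
            hjfun h N j0 x * (B j0 : ℝ) := by
          refine Finset.sum_eq_single_of_mem j0 hj0mem fun j hj hne => ?_
          have hz : hjfun h N j x = 0 := by
            by_contra hc
            rcases lt_or_gt_of_ne hne with hlt' | hlt'
            · exact hjfun_disjoint h h0 h1 hlt' hc hjfne
            · exact hjfun_disjoint h h0 h1 hlt' hjfne hc
          rw [hz, zero_mul]
        rw [hsum, abs_mul]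
        have hBj : |(B j0 : ℝ)| ≤ 1 := by
          rw [abs_of_nonneg (Nat.cast_nonneg _)]
          exact_mod_cast hB j0 (Finset.mem_range.mp hj0mem)
        calc |hjfun h N j0 x| * |(B j0:ℝ)| ≤ (supNorm h / (4*(N:ℝ)^2)) * 1 :=
              mul_le_mul (hjb j0 x) hBj (abs_nonneg _) hcnonneg
          _ = supNorm h / (4*(N:ℝ)^2) := mul_one _
    have hDpos : (0:ℝ) < 2 * (Real.sin (Real.pi*x))^2 := lt_of_lt_of_le one_pos hsin
    rw [abs_div, abs_of_pos hDpos]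
    calc |∑ j ∈ Finset.range N, hjfun h N j x * (B j : ℝ)| /
          (2 * Real.sin (Real.pi * x) ^ 2)
        ≤ |∑ j ∈ Finset.range N, hjfun h N j x * (B j : ℝ)| :=
          div_le_self (abs_nonneg _) hsin
      _ ≤ supNorm h / (4*(N:ℝ)^2) := hSb
  -- smoothness ingredients
  have hjc : ∀ j, ContDiff ℝ 2 (fun y => hjfun h N j y) := by
    intro j
    have hre : (fun y => hjfun h N j y) =
        fun y => Hext h (2 * (N:ℝ) * (y - xnode N j)) / (4*(N:ℝ)^2) := rfl
    rw [hre]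
    exact (HC2.comp (contDiff_const.mul (contDiff_id.sub contDiff_const))).div_const _
  have hnum : ContDiff ℝ 2 (fun y => ∑ j ∈ Finset.range N, hjfun h N j y * (B j:ℝ)) :=
    ContDiff.sum fun j _ => (hjc j).mul contDiff_const
  have hden : ContDiff ℝ 2 (fun y : ℝ => 2 * Real.sin (Real.pi * y)^2) :=
    contDiff_const.mul ((Real.contDiff_sin.comp (contDiff_const.mul contDiff_id)).pow 2)
  constructor
  · rw [heq]
    intro x hx
    rcases eq_or_lt_of_le hx.1 with h0x | h0x
    · -- x = 0
      subst h0x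
      refine (contDiffWithinAt_const (c := (0:ℝ))).congr_of_eventuallyEq ?_ ?_
      · filter_upwards [mem_nhdsWithin_of_mem_nhds
          (Iio_mem_nhds (show (0:ℝ) < 1/4 by norm_num))] with y hy
        show (∑ j ∈ Finset.range N, hjfun h N j y * (B j : ℝ)) /
          (2 * (Real.sin (Real.pi * y)) ^ 2) = 0
        rw [hzero y (Or.inl hy.le), zero_div]
      · show (∑ j ∈ Finset.range N, hjfun h N j 0 * (B j : ℝ)) /
          (2 * (Real.sin (Real.pi * 0)) ^ 2) = 0
        rw [hzero 0 (Or.inl (by norm_num)), zero_div]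
    rcases eq_or_lt_of_le hx.2 with h1x | h1x
    · -- x = 1
      subst h1x
      refine (contDiffWithinAt_const (c := (0:ℝ))).congr_of_eventuallyEq ?_ ?_
      · filter_upwards [mem_nhdsWithin_of_mem_nhds
          (Ioi_mem_nhds (show (3/4:ℝ) < 1 by norm_num))] with y hy
        show (∑ j ∈ Finset.range N, hjfun h N j y * (B j : ℝ)) /
          (2 * (Real.sin (Real.pi * y)) ^ 2) = 0
        rw [hzero y (Or.inr hy.le), zero_div]
      · show (∑ j ∈ Finset.range N, hjfun h N j 1 * (B j : ℝ)) /
          (2 * (Real.sin (Real.pi * 1)) ^ 2) = 0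
        rw [hzero 1 (Or.inr (by norm_num)), zero_div]
    · -- interior
      have hsne : Real.sin (Real.pi * x) ≠ 0 := by
        refine ne_of_gt (Real.sin_pos_of_pos_of_lt_pi ?_ ?_)
        · exact mul_pos Real.pi_pos h0x
        · nlinarith [Real.pi_pos, mul_pos Real.pi_pos (show (0:ℝ) < 1 - x by linarith)]
      have hDne : 2 * Real.sin (Real.pi * x)^2 ≠ 0 := by positivity
      exact (hnum.contDiffAt.div hden.contDiffAt hDne).contDiffWithinAt
  · haveI : Nonempty (Set.Icc (0:ℝ) 1) := (Set.nonempty_Icc.mpr zero_le_one).to_subtype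
    refine ciSup_le fun x => ?_
    rw [heq]
    exact hpt x x.2
end

section
/- For every Boolean function B : {0,1,…,N−1} → {0,1}, ∫₀¹ f_B(x)·sin²(πx) dx = (Int(h)/(16N²))·S_N(B), where S_N(B) = (1/N)·Σ_{j=0}^{N−1} B(j). -/
lemma Hext_cont (h : ℝ → ℝ) (hc : ContinuousOn h (Set.Icc 0 1))
    (h0 : h 0 = 0) (h1 : h 1 = 0) : Continuous (Hext h) := by
  have h01 : (0:ℝ) ≤ 1 := zero_le_one
  have hrc : Continuous ((Set.Icc (0:ℝ) 1).restrict h) :=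
    continuousOn_iff_continuous_restrict.mp hc
  have hcont : Continuous (Set.IccExtend h01 ((Set.Icc (0:ℝ) 1).restrict h)) :=
    hrc.Icc_extend'
  refine hcont.congr fun x => ?_
  by_cases hx : x ∈ Set.Icc (0:ℝ) 1
  · simp [Hext, hx, Set.IccExtend_of_mem h01 _ hx]
    rfl
  · rcases not_and_or.mp hx with hx' | hx'
    · push_neg at hx'
      rw [Set.IccExtend_of_le_left h01 _ hx'.le]
      simp [Hext, hx, h0]
      exact h0
    · push_neg at hx'
      rw [Set.IccExtend_of_right_le h01 _ hx'.le]
      simp [Hext, hx, h1]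
      exact h1

lemma Hext_zero_left (h : ℝ → ℝ) (h0 : h 0 = 0) {x : ℝ} (hx : x ≤ 0) : Hext h x = 0 := by
  rcases eq_or_lt_of_le hx with rfl | hx'
  · simp [Hext, h0]
  · simp [Hext, not_le.mpr hx']

lemma Hext_zero_right (h : ℝ → ℝ) (h1 : h 1 = 0) {x : ℝ} (hx : 1 ≤ x) : Hext h x = 0 := by
  rcases eq_or_lt_of_le hx with rfl | hx'
  · simp [Hext, h1]
  · simp [Hext]
    intro _ hx''; linarith

lemma hjfun_cont (h : ℝ → ℝ) (hc : ContinuousOn h (Set.Icc 0 1))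
    (h0 : h 0 = 0) (h1 : h 1 = 0) (N j : ℕ) : Continuous (hjfun h N j) := by
  unfold hjfun
  exact ((Hext_cont h hc h0 h1).comp (by continuity)).div_const _

lemma hjfun_zero (h : ℝ → ℝ) (h0 : h 0 = 0) (N j : ℕ) (hN : 0 < N) :
    hjfun h N j 0 = 0 := by
  have hN1 : (1:ℝ) ≤ N := by exact_mod_cast hN
  unfold hjfun
  rw [Hext_zero_left h h0 (by
    have : (0:ℝ) ≤ (j:ℝ) := Nat.cast_nonneg j
    rw [xnode]
    have h2N : (0:ℝ) < 2 * N := by positivity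
    have : (0:ℝ) ≤ (j:ℝ) / (2*N) := by positivity
    nlinarith)]
  simp

lemma hjfun_one (h : ℝ → ℝ) (h1 : h 1 = 0) (N j : ℕ) (hN : 0 < N) (hj : j < N) :
    hjfun h N j 1 = 0 := by
  have hN1 : (1:ℝ) ≤ N := by exact_mod_cast hN
  have hjN : (j:ℝ) ≤ (N:ℝ) - 1 := by
    have : (j:ℝ) + 1 ≤ N := by exact_mod_cast hj
    linarith
  unfold hjfun
  rw [Hext_zero_right h h1 (by
    rw [xnode]
    have h2N : (0:ℝ) < 2 * N := by positivity
    rw [mul_sub, mul_add]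
    rw [mul_div_cancel₀ _ (ne_of_gt h2N)]
    nlinarith)]
  simp

lemma hjfun_integral (h : ℝ → ℝ) (hc : ContinuousOn h (Set.Icc 0 1))
    (h0 : h 0 = 0) (h1 : h 1 = 0) (N j : ℕ) (hN : 0 < N) (hj : j < N) :
    ∫ x in (0:ℝ)..1, hjfun h N j x = (∫ x in (0:ℝ)..1, h x) / (8 * N ^ 3) := by
  have hN1 : (1:ℝ) ≤ N := by exact_mod_cast hN
  have h2N : (0:ℝ) < 2 * N := by positivity
  have hjN : (j:ℝ) ≤ (N:ℝ) - 1 := by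
    have : (j:ℝ) + 1 ≤ N := by exact_mod_cast hj
    linarith
  have hcH : Continuous (Hext h) := Hext_cont h hc h0 h1
  set d : ℝ := -(2 * N * xnode N j) with hd
  have hd0 : d ≤ 0 := by
    rw [hd, xnode, neg_nonpos]
    positivity
  have hd1 : (1:ℝ) ≤ 2 * N * 1 + d := by
    rw [hd, xnode, mul_add, mul_one]
    rw [mul_div_cancel₀ _ (ne_of_gt h2N)]
    nlinarith
  have key : ∀ x : ℝ, hjfun h N j x = Hext h (2 * N * x + d) / (4 * N ^ 2) := by
    intro x; rw [hjfun, hd]; ring_nf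
  simp_rw [key]
  rw [intervalIntegral.integral_div]
  rw [intervalIntegral.integral_comp_mul_add (Hext h) (ne_of_gt h2N) d]
  have hint : ∀ a b : ℝ, IntervalIntegrable (Hext h) MeasureTheory.volume a b :=
    fun a b => hcH.intervalIntegrable a b
  have split1 : ∫ x in (2*(N:ℝ)*0 + d)..(2*N*1 + d), Hext h x =
      (∫ x in (2*(N:ℝ)*0 + d)..(0:ℝ), Hext h x) + ∫ x in (0:ℝ)..(2*N*1 + d), Hext h x :=
    (intervalIntegral.integral_add_adjacent_intervals (hint _ _) (hint _ _)).symm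
  have split2 : ∫ x in (0:ℝ)..(2*(N:ℝ)*1 + d), Hext h x =
      (∫ x in (0:ℝ)..(1:ℝ), Hext h x) + ∫ x in (1:ℝ)..(2*N*1 + d), Hext h x :=
    (intervalIntegral.integral_add_adjacent_intervals (hint _ _) (hint _ _)).symm
  have z1 : (∫ x in (2*(N:ℝ)*0 + d)..(0:ℝ), Hext h x) = 0 := by
    rw [intervalIntegral.integral_congr (g := fun _ => (0:ℝ)) ?_, intervalIntegral.integral_const]
    · simp
    · intro x hx
      rw [Set.uIcc_of_le (by linarith)] at hx
      exact Hext_zero_left h h0 hx.2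
  have z2 : (∫ x in (1:ℝ)..(2*(N:ℝ)*1 + d), Hext h x) = 0 := by
    rw [intervalIntegral.integral_congr (g := fun _ => (0:ℝ)) ?_, intervalIntegral.integral_const]
    · simp
    · intro x hx
      rw [Set.uIcc_of_le (by linarith)] at hx
      exact Hext_zero_right h h1 hx.1
  have hmid : (∫ x in (0:ℝ)..(1:ℝ), Hext h x) = ∫ x in (0:ℝ)..1, h x := by
    refine intervalIntegral.integral_congr fun x hx => ?_
    rw [Set.uIcc_of_le zero_le_one] at hx
    simp [Hext, hx]
  rw [split1, split2, z1, z2, hmid]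
  have hN0 : (N:ℝ) ≠ 0 := by positivity
  field_simp
  simp only [smul_eq_mul, zero_add, add_zero]
  have e : (N:ℝ) * (1 / (2 * N)) = 1 / 2 := by field_simp
  rw [← mul_assoc, e]
  ring

/-- For every Boolean function `B : {0,…,N−1} → {0,1}`,
`∫₀¹ f_B(x)·sin²(πx) dx = (Int(h)/(16N²))·S_N(B)` where
`S_N(B) = (1/N)·Σ_{j<N} B(j)`. -/
theorem fB_integral
    (h : ℝ → ℝ) (hh : ContDiffOn ℝ 2 h (Set.Icc 0 1))
    (h0 : h 0 = 0) (h1 : h 1 = 0)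
    (hd0 : derivWithin h (Set.Icc 0 1) 0 = 0)
    (hd1 : derivWithin h (Set.Icc 0 1) 1 = 0)
    (hdd0 : derivWithin (derivWithin h (Set.Icc 0 1)) (Set.Icc 0 1) 0 = 0)
    (hdd1 : derivWithin (derivWithin h (Set.Icc 0 1)) (Set.Icc 0 1) 1 = 0)
    (hInt : 0 < ∫ x in (0:ℝ)..1, h x)
    (N : ℕ) (hN : 0 < N) (B : ℕ → ℕ) (hB : ∀ j < N, B j ≤ 1) :
    (∫ x in (0:ℝ)..1, fB h N B x * (Real.sin (Real.pi * x)) ^ 2) =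
      ((∫ x in (0:ℝ)..1, h x) / (16 * N ^ 2)) *
        ((1 / N : ℝ) * ∑ j ∈ Finset.range N, (B j : ℝ)) := by
  have hc : ContinuousOn h (Set.Icc 0 1) := hh.continuousOn
  have hN0 : (N:ℝ) ≠ 0 := by positivity
  have step1 : Set.EqOn (fun x => fB h N B x * (Real.sin (Real.pi * x)) ^ 2)
      (fun x => ∑ j ∈ Finset.range N, hjfun h N j x * (B j : ℝ) / 2)
      (Set.uIcc (0:ℝ) 1) := by
    rw [Set.uIcc_of_le zero_le_one]
    intro x hx
    rcases eq_or_lt_of_le hx.1 with rfl | hx0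
    · simp only
      rw [mul_zero, Real.sin_zero]
      norm_num
      exact (Finset.sum_eq_zero fun j _ => by
        rw [hjfun_zero h h0 N j hN, zero_mul, zero_div]).symm
    rcases eq_or_lt_of_le hx.2 with rfl | hx1
    · simp only
      rw [mul_one, Real.sin_pi]
      norm_num
      exact (Finset.sum_eq_zero fun j hj => by
        rw [hjfun_one h h1 N j hN (Finset.mem_range.mp hj), zero_mul, zero_div]).symm
    · have hsin : 0 < Real.sin (Real.pi * x) := by
        apply Real.sin_pos_of_pos_of_lt_pi
        · exact mul_pos Real.pi_pos hx0
        · nlinarith [Real.pi_pos]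
      have hs : Real.sin (Real.pi * x) ≠ 0 := ne_of_gt hsin
      simp only [fB]
      rw [Finset.sum_mul]
      refine Finset.sum_congr rfl fun j _ => ?_
      field_simp
  rw [intervalIntegral.integral_congr step1]
  have hcontj : ∀ j : ℕ, Continuous fun x => hjfun h N j x * (B j : ℝ) / 2 :=
    fun j => (((hjfun_cont h hc h0 h1 N j).mul continuous_const).div_const 2)
  rw [intervalIntegral.integral_finset_sum
    (fun (j : ℕ) (_ : j ∈ Finset.range N) => ((hcontj j).intervalIntegrable 0 1))]
  have hterm : ∀ j ∈ Finset.range N,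
      (∫ x in (0:ℝ)..1, hjfun h N j x * (B j : ℝ) / 2) =
        ((∫ x in (0:ℝ)..1, h x) / (16 * N ^ 3)) * (B j : ℝ) := by
    intro j hj
    rw [intervalIntegral.integral_div, intervalIntegral.integral_mul_const,
      hjfun_integral h hc h0 h1 N j hN (Finset.mem_range.mp hj)]
    field_simp
    ring
  rw [Finset.sum_congr rfl hterm, ← Finset.mul_sum]
  field_simp
end

section
/- There exists a constant C > 0, depending only on h, such that for every positive integer N and every Boolean function B : {0,1,…,N−1} → {0,1}, the function f_B satisfies ‖f_B′‖∞ ≤ ‖h′‖∞/(2N) + C/N² and ‖f_B″‖∞ ≤ ‖h″‖∞ + C/N. -/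
open Set Real

lemma bddAbove_absIcc {g : ℝ → ℝ} (hg : ContinuousOn g (Icc 0 1)) :
    BddAbove (Set.range fun z : Set.Icc (0:ℝ) 1 => |g z|) := by
  obtain ⟨C, hC⟩ := isCompact_Icc.exists_bound_of_continuousOn hg
  exact ⟨C, by rintro _ ⟨z, rfl⟩; simpa using hC z z.2⟩

lemma abs_le_supNorm {g : ℝ → ℝ} (hg : ContinuousOn g (Icc 0 1)) {y : ℝ}
    (hy : y ∈ Icc (0:ℝ) 1) : |g y| ≤ supNorm g :=
  le_ciSup (bddAbove_absIcc hg) (⟨y, hy⟩ : Set.Icc (0:ℝ) 1)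

lemma supNorm_nonneg {g : ℝ → ℝ} (hg : ContinuousOn g (Icc 0 1)) : 0 ≤ supNorm g :=
  le_trans (abs_nonneg _) (abs_le_supNorm hg (by norm_num : (0:ℝ) ∈ Icc (0:ℝ) 1))

lemma abs_Hext_le {g : ℝ → ℝ} (hg : ContinuousOn g (Icc 0 1)) (y : ℝ) :
    |Hext g y| ≤ supNorm g := by
  unfold Hext
  by_cases hy : y ∈ Icc (0:ℝ) 1
  · simpa [hy] using abs_le_supNorm hg hy
  · simpa [hy] using supNorm_nonneg hg

lemma Hext_zero_of_neg {g : ℝ → ℝ} {y : ℝ} (hy : y < 0) : Hext g y = 0 := by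
  simp [Hext, not_le.2 hy, Set.mem_Icc]
lemma Hext_zero_of_gt {g : ℝ → ℝ} {y : ℝ} (hy : 1 < y) : Hext g y = 0 := by
  simp [Hext, Set.mem_Icc, not_le.2 hy]

lemma hasDerivAt_Hext {g : ℝ → ℝ} (hg : ContDiffOn ℝ 1 g (Icc 0 1))
    (g0 : g 0 = 0) (g1 : g 1 = 0)
    (gd0 : derivWithin g (Icc 0 1) 0 = 0) (gd1 : derivWithin g (Icc 0 1) 1 = 0)
    (x : ℝ) : HasDerivAt (Hext g) (Hext (derivWithin g (Icc 0 1)) x) x := by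
  have hdiff : DifferentiableOn ℝ g (Icc 0 1) := hg.differentiableOn one_ne_zero
  rcases lt_trichotomy x 0 with hx | rfl | hx
  · have : Hext g =ᶠ[nhds x] (fun _ => (0:ℝ)) := by
      filter_upwards [Iio_mem_nhds hx] with y hy
      exact Hext_zero_of_neg hy
    rw [Hext_zero_of_neg hx]
    exact (hasDerivAt_const x (0:ℝ)).congr_of_eventuallyEq this
  · -- x = 0
    have hmem : (0:ℝ) ∈ Icc (0:ℝ) 1 := by norm_num
    have hIcc : HasDerivWithinAt (Hext g) 0 (Icc 0 1) 0 := by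
      have := (hdiff 0 hmem).hasDerivWithinAt
      rw [gd0] at this
      exact this.congr (fun y hy => by simp [Hext, hy]) (by simp [Hext, hmem])
    have hIci : HasDerivWithinAt (Hext g) 0 (Ici 0) 0 := by
      refine hIcc.mono_of_mem_nhdsWithin ?_
      have : Ici (0:ℝ) ∩ Iic 1 ∈ nhdsWithin 0 (Ici 0) :=
        inter_mem_nhdsWithin _ (Iic_mem_nhds one_pos)
      rwa [Set.Ici_inter_Iic] at this
    have hIic : HasDerivWithinAt (Hext g) 0 (Iic 0) 0 := by
      refine (hasDerivWithinAt_const 0 _ (0:ℝ)).congr (fun y hy => ?_) (by simp [Hext, hmem, g0])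
      rcases lt_or_eq_of_le (mem_Iic.1 hy) with hy' | hy'
      · exact Hext_zero_of_neg hy'
      · simp [hy', Hext, hmem, g0]
    have := (hIic.union hIci)
    rw [Iic_union_Ici, hasDerivWithinAt_univ] at this
    simpa [Hext, hmem, gd0] using this
  rcases lt_trichotomy x 1 with hx1 | rfl | hx1
  · -- x ∈ (0,1)
    have hmem : x ∈ Icc (0:ℝ) 1 := ⟨le_of_lt hx, le_of_lt hx1⟩
    have hnhds : Icc (0:ℝ) 1 ∈ nhds x := Icc_mem_nhds hx hx1
    have hda : DifferentiableAt ℝ g x := (hdiff x hmem).differentiableAt hnhds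
    have : Hext g =ᶠ[nhds x] g := by
      filter_upwards [Ioo_mem_nhds hx hx1] with y hy
      simp [Hext, Set.mem_Icc.2 ⟨le_of_lt hy.1, le_of_lt hy.2⟩]
    have h2 : HasDerivAt (Hext g) (deriv g x) x := hda.hasDerivAt.congr_of_eventuallyEq this
    simpa [Hext, hmem, derivWithin_of_mem_nhds hnhds] using h2
  · -- x = 1
    have hmem : (1:ℝ) ∈ Icc (0:ℝ) 1 := by norm_num
    have hIcc : HasDerivWithinAt (Hext g) 0 (Icc 0 1) 1 := by
      have := (hdiff 1 hmem).hasDerivWithinAt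
      rw [gd1] at this
      exact this.congr (fun y hy => by simp [Hext, hy]) (by simp [Hext, hmem])
    have hIic : HasDerivWithinAt (Hext g) 0 (Iic 1) 1 := by
      refine hIcc.mono_of_mem_nhdsWithin ?_
      have : Iic (1:ℝ) ∩ Ici 0 ∈ nhdsWithin 1 (Iic 1) :=
        inter_mem_nhdsWithin _ (Ici_mem_nhds one_pos)
      rwa [Set.inter_comm, Set.Ici_inter_Iic] at this
    have hIci : HasDerivWithinAt (Hext g) 0 (Ici 1) 1 := by
      refine (hasDerivWithinAt_const 1 _ (0:ℝ)).congr (fun y hy => ?_) (by simp [Hext, hmem, g1])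
      rcases lt_or_eq_of_le (mem_Ici.1 hy) with hy' | hy'
      · exact Hext_zero_of_gt hy'
      · simp [← hy', Hext, hmem, g1]
    have := (hIic.union hIci)
    rw [Iic_union_Ici, hasDerivWithinAt_univ] at this
    simpa [Hext, hmem, gd1] using this
  · have : Hext g =ᶠ[nhds x] (fun _ => (0:ℝ)) := by
      filter_upwards [Ioi_mem_nhds hx1] with y hy
      exact Hext_zero_of_gt hy
    rw [Hext_zero_of_gt hx1]
    exact (hasDerivAt_const x (0:ℝ)).congr_of_eventuallyEq this

noncomputable def Ssum (g : ℝ → ℝ) (N : ℕ) (B : ℕ → ℕ) (c : ℝ) : ℝ → ℝ :=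
  fun x => ∑ j ∈ Finset.range N, c * Hext g (2 * N * (x - xnode N j)) * (B j : ℝ)

lemma Hext_mem_of_ne {g : ℝ → ℝ} {y : ℝ} (hy : Hext g y ≠ 0) :
    y ∈ Icc (0:ℝ) 1 ∧ g y ≠ 0 := by
  by_cases hm : y ∈ Icc (0:ℝ) 1
  · exact ⟨hm, by simpa [Hext, hm] using hy⟩
  · exact absurd (by simp [Hext, hm]) hy

lemma abs_sum_le_single {s : Finset ℕ} {f : ℕ → ℝ} {c : ℝ} (hc : 0 ≤ c)
    (hb : ∀ j ∈ s, |f j| ≤ c)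
    (hp : ∀ j ∈ s, ∀ k ∈ s, j ≠ k → f j = 0 ∨ f k = 0) :
    |∑ j ∈ s, f j| ≤ c := by
  by_cases hz : ∀ j ∈ s, f j = 0
  · simpa [Finset.sum_eq_zero hz] using hc
  · push_neg at hz
    obtain ⟨j₀, hj₀, hne⟩ := hz
    rw [Finset.sum_eq_single_of_mem j₀ hj₀
      (fun k hk hkj => (hp k hk j₀ hj₀ hkj).resolve_right hne)]
    exact hb j₀ hj₀

lemma Ssum_hasDerivAt {g g' : ℝ → ℝ} (N : ℕ) (B : ℕ → ℕ) (c : ℝ)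
    (hg : ∀ y, HasDerivAt (Hext g) (Hext g' y) y) (x : ℝ) :
    HasDerivAt (Ssum g N B c) (Ssum g' N B (2 * N * c) x) x := by
  unfold Ssum
  refine HasDerivAt.fun_sum fun j _ => ?_
  have hin : HasDerivAt (fun y : ℝ => 2 * (N:ℝ) * (y - xnode N j)) (2 * N) x := by
    simpa using ((hasDerivAt_id x).sub_const (xnode N j)).const_mul (2 * (N:ℝ))
  have hcomp := (hg (2 * N * (x - xnode N j))).comp x hin
  have h2 : HasDerivAt (fun x => c * Hext g (2 * N * (x - xnode N j)) * (B j : ℝ))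
      (c * (Hext g' (2 * N * (x - xnode N j)) * (2 * N)) * (B j : ℝ)) x := by
    simpa [Function.comp] using (hcomp.const_mul c).mul_const ((B j : ℝ))
  refine h2.congr_deriv ?_; ring

lemma Ssum_zero_lt {g : ℝ → ℝ} {N : ℕ} (B : ℕ → ℕ) (c : ℝ) (hN : 0 < N)
    {x : ℝ} (hx : x < 1/4) : Ssum g N B c x = 0 := by
  unfold Ssum
  refine Finset.sum_eq_zero fun j _ => ?_
  have hN' : (0:ℝ) < N := by exact_mod_cast hN
  have hxj : x - xnode N j < 0 := by
    have : (0:ℝ) ≤ (j:ℝ) / (2 * N) := by positivity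
    unfold xnode; linarith
  rw [Hext_zero_of_neg (mul_neg_of_pos_of_neg (by positivity) hxj)]
  ring

lemma Ssum_zero_gt {g : ℝ → ℝ} {N : ℕ} (B : ℕ → ℕ) (c : ℝ) (hN : 0 < N)
    {x : ℝ} (hx : 3/4 < x) : Ssum g N B c x = 0 := by
  unfold Ssum
  refine Finset.sum_eq_zero fun j hj => ?_
  have hN' : (1:ℝ) ≤ N := by exact_mod_cast hN
  have hN0 : (N:ℝ) ≠ 0 := by positivity
  have hjN : (j:ℝ) ≤ (N:ℝ) - 1 := by
    have := Finset.mem_range.1 hj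
    have : (j:ℝ) + 1 ≤ N := by exact_mod_cast this
    linarith
  have key : 2 * (N:ℝ) * (x - xnode N j) = 2 * N * x - N / 2 - j := by
    unfold xnode; field_simp; ring
  have : (1:ℝ) < 2 * N * (x - xnode N j) := by
    rw [key]; nlinarith
  rw [Hext_zero_of_gt this]; ring

lemma Ssum_abs_le {g : ℝ → ℝ} (hgc : ContinuousOn g (Icc 0 1)) (hg1 : g 1 = 0)
    {N : ℕ} {B : ℕ → ℕ} (c : ℝ) (hN : 0 < N) (hB : ∀ j < N, B j ≤ 1) (x : ℝ) :
    |Ssum g N B c x| ≤ |c| * supNorm g := by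
  have hsn := supNorm_nonneg hgc
  have key : ∀ j k : ℕ, j < k → Hext g (2 * N * (x - xnode N j)) = 0 ∨
      Hext g (2 * N * (x - xnode N k)) = 0 := by
    intro j k hjk
    by_contra hcon
    push_neg at hcon
    obtain ⟨hj, hk⟩ := hcon
    obtain ⟨hjm, hjg⟩ := Hext_mem_of_ne hj
    obtain ⟨hkm, _⟩ := Hext_mem_of_ne hk
    have hN0 : (N:ℝ) ≠ 0 := by
      have : (0:ℝ) < N := by exact_mod_cast hN
      positivity
    have hyj1 : 2 * (N:ℝ) * (x - xnode N j) < 1 := by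
      rcases lt_or_eq_of_le hjm.2 with h | h
      · exact h
      · exact absurd (by rw [h]; exact hg1) hjg
    have hdiff : 2 * (N:ℝ) * (x - xnode N k) =
        2 * N * (x - xnode N j) - ((k:ℝ) - j) := by
      unfold xnode; field_simp; ring
    have hk1 : (1:ℝ) ≤ (k:ℝ) - j := by
      have : (j:ℝ) + 1 ≤ k := by exact_mod_cast hjk
      linarith
    have : 2 * (N:ℝ) * (x - xnode N k) < 0 := by rw [hdiff]; linarith
    exact absurd (Hext_zero_of_neg this) hk
  unfold Ssum
  refine abs_sum_le_single (by positivity) (fun j hj => ?_) (fun j hj k hk hjk => ?_)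
  · have hBj : |(B j : ℝ)| ≤ 1 := by
      rw [abs_of_nonneg (by positivity)]
      exact_mod_cast hB j (Finset.mem_range.1 hj)
    calc |c * Hext g (2 * N * (x - xnode N j)) * (B j : ℝ)|
        = |c| * |Hext g (2 * N * (x - xnode N j))| * |(B j : ℝ)| := by
          rw [abs_mul, abs_mul]
      _ ≤ |c| * supNorm g * 1 :=
          mul_le_mul (mul_le_mul_of_nonneg_left (abs_Hext_le hgc _) (abs_nonneg c))
            hBj (abs_nonneg _) (by positivity)
      _ = |c| * supNorm g := mul_one _
  · rcases lt_or_gt_of_ne hjk with h | h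
    · rcases key j k h with h0 | h0
      · exact Or.inl (by rw [h0]; ring)
      · exact Or.inr (by rw [h0]; ring)
    · rcases key k j h with h0 | h0
      · exact Or.inr (by rw [h0]; ring)
      · exact Or.inl (by rw [h0]; ring)


noncomputable def qfun (x : ℝ) : ℝ := 2 * Real.sin (Real.pi * x) ^ 2
noncomputable def q1f (x : ℝ) : ℝ := 4 * Real.pi * (Real.sin (Real.pi * x) * Real.cos (Real.pi * x))
noncomputable def q2f (x : ℝ) : ℝ := 4 * Real.pi ^ 2 * (Real.cos (Real.pi * x) ^ 2 - Real.sin (Real.pi * x) ^ 2)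

lemma hasDerivAt_sin_pi (x : ℝ) :
    HasDerivAt (fun y => Real.sin (Real.pi * y)) (Real.pi * Real.cos (Real.pi * x)) x := by
  have h := (Real.hasDerivAt_sin (Real.pi * x)).comp x ((hasDerivAt_id x).const_mul Real.pi)
  simp only [Function.comp_def] at h
  refine h.congr_deriv ?_
  ring

lemma hasDerivAt_cos_pi (x : ℝ) :
    HasDerivAt (fun y => Real.cos (Real.pi * y)) (-(Real.pi * Real.sin (Real.pi * x))) x := by
  have h := (Real.hasDerivAt_cos (Real.pi * x)).comp x ((hasDerivAt_id x).const_mul Real.pi)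
  simp only [Function.comp_def] at h
  refine h.congr_deriv ?_
  ring

lemma hasDerivAt_qfun (x : ℝ) : HasDerivAt qfun (q1f x) x := by
  have := ((hasDerivAt_sin_pi x).pow 2).const_mul (2:ℝ)
  refine this.congr_deriv ?_
  unfold q1f; ring

lemma hasDerivAt_q1f (x : ℝ) : HasDerivAt q1f (q2f x) x := by
  have := ((hasDerivAt_sin_pi x).mul (hasDerivAt_cos_pi x)).const_mul (4 * Real.pi)
  refine this.congr_deriv ?_
  unfold q2f; ring

lemma q1f_abs_le (x : ℝ) : |q1f x| ≤ 4 * Real.pi := by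
  unfold q1f
  rw [abs_mul, abs_of_pos (by positivity : (0:ℝ) < 4 * Real.pi), abs_mul]
  have h1 : |Real.sin (Real.pi * x)| ≤ 1 := Real.abs_sin_le_one _
  have h2 : |Real.cos (Real.pi * x)| ≤ 1 := Real.abs_cos_le_one _
  have h3 : |Real.sin (Real.pi * x)| * |Real.cos (Real.pi * x)| ≤ 1 :=
    mul_le_one₀ h1 (abs_nonneg _) h2
  nlinarith [Real.pi_pos]

lemma q2f_abs_le (x : ℝ) : |q2f x| ≤ 8 * Real.pi ^ 2 := by
  unfold q2f
  rw [abs_mul, abs_of_pos (by positivity : (0:ℝ) < 4 * Real.pi ^ 2)]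
  have h1 := Real.sin_sq_add_cos_sq (Real.pi * x)
  have h2 : |Real.cos (Real.pi * x) ^ 2 - Real.sin (Real.pi * x) ^ 2| ≤ 2 := by
    rw [abs_le]
    constructor <;> nlinarith [sq_nonneg (Real.sin (Real.pi * x)), sq_nonneg (Real.cos (Real.pi * x))]
  nlinarith [Real.pi_pos]

lemma qfun_ge_one {x : ℝ} (hx : x ∈ Icc (1/4 : ℝ) (3/4)) : 1 ≤ qfun x := by
  unfold qfun
  rw [Real.sin_sq_eq_half_sub]
  have hc : Real.cos (2 * (Real.pi * x)) ≤ 0 := by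
    apply Real.cos_nonpos_of_pi_div_two_le_of_le
    · nlinarith [Real.pi_pos, hx.1]
    · nlinarith [Real.pi_pos, hx.2]
  linarith

lemma F_hasDerivAt {P P1 : ℝ → ℝ} {x : ℝ} (hP : HasDerivAt P (P1 x) x)
    (hq : qfun x ≠ 0) :
    HasDerivAt (fun y => P y * (qfun y)⁻¹)
      (P1 x * (qfun x)⁻¹ - P x * q1f x * ((qfun x) ^ 2)⁻¹) x := by
  have := hP.mul ((hasDerivAt_qfun x).inv hq)
  refine this.congr_deriv ?_
  simp only [Pi.inv_apply, Pi.pow_apply, Pi.mul_apply, Nat.cast_ofNat]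
  field_simp
  ring

lemma G1_hasDerivAt {P P1 P2 : ℝ → ℝ} {x : ℝ} (hP : HasDerivAt P (P1 x) x)
    (hP1 : HasDerivAt P1 (P2 x) x) (hq : qfun x ≠ 0) :
    HasDerivAt (fun y => P1 y * (qfun y)⁻¹ - P y * q1f y * ((qfun y) ^ 2)⁻¹)
      (P2 x * (qfun x)⁻¹ - 2 * P1 x * q1f x * ((qfun x) ^ 2)⁻¹
        - P x * q2f x * ((qfun x) ^ 2)⁻¹ + 2 * P x * (q1f x) ^ 2 * ((qfun x) ^ 3)⁻¹) x := by
  have h1 := hP1.mul ((hasDerivAt_qfun x).inv hq)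
  have h2 := (hP.mul (hasDerivAt_q1f x)).mul
    (((hasDerivAt_qfun x).pow 2).inv (pow_ne_zero 2 hq))
  have := h1.sub h2
  refine this.congr_deriv ?_
  simp only [Pi.inv_apply, Pi.pow_apply, Pi.mul_apply, Nat.cast_ofNat]
  field_simp
  ring

set_option maxHeartbeats 2000000 in
/-- There is a constant `C > 0`, depending only on `h`, such that for every
positive integer `N` and every Boolean function `B : {0,…,N−1} → {0,1}`,
`‖f_B′‖∞ ≤ ‖h′‖∞/(2N) + C/N²` and `‖f_B″‖∞ ≤ ‖h″‖∞ + C/N`. -/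
theorem fB_derivative_bounds
    (h : ℝ → ℝ) (hh : ContDiffOn ℝ 2 h (Set.Icc 0 1))
    (h0 : h 0 = 0) (h1 : h 1 = 0)
    (hd0 : derivWithin h (Set.Icc 0 1) 0 = 0)
    (hd1 : derivWithin h (Set.Icc 0 1) 1 = 0)
    (hdd0 : derivWithin (derivWithin h (Set.Icc 0 1)) (Set.Icc 0 1) 0 = 0)
    (hdd1 : derivWithin (derivWithin h (Set.Icc 0 1)) (Set.Icc 0 1) 1 = 0)
    (hInt : 0 < ∫ x in (0:ℝ)..1, h x) :
    ∃ C > 0, ∀ N : ℕ, 0 < N → ∀ B : ℕ → ℕ, (∀ j < N, B j ≤ 1) →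
      supNorm (derivWithin (fB h N B) (Set.Icc 0 1)) ≤
        supNorm (derivWithin h (Set.Icc 0 1)) / (2 * N) + C / N ^ 2 ∧
      supNorm (derivWithin (derivWithin (fB h N B) (Set.Icc 0 1)) (Set.Icc 0 1)) ≤
        supNorm (derivWithin (derivWithin h (Set.Icc 0 1)) (Set.Icc 0 1)) + C / N := by
  have hpi := Real.pi_pos
  set h' : ℝ → ℝ := derivWithin h (Set.Icc 0 1) with hh'def
  set h'' : ℝ → ℝ := derivWithin h' (Set.Icc 0 1) with hh''def
  have hC1 : ContDiffOn ℝ 1 h' (Icc 0 1) :=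
    hh.derivWithin (uniqueDiffOn_Icc one_pos) (by norm_num)
  have hcont0 : ContinuousOn h (Icc 0 1) := hh.continuousOn
  have hcont1 : ContinuousOn h' (Icc 0 1) := hC1.continuousOn
  have hcont2 : ContinuousOn h'' (Icc 0 1) :=
    hC1.continuousOn_derivWithin (uniqueDiffOn_Icc one_pos) le_rfl
  have D1 : ∀ y, HasDerivAt (Hext h) (Hext h' y) y :=
    hasDerivAt_Hext (hh.of_le (by norm_num)) h0 h1 hd0 hd1
  have D2 : ∀ y, HasDerivAt (Hext h') (Hext h'' y) y :=
    hasDerivAt_Hext hC1 hd0 hd1 hdd0 hdd1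
  set M0 : ℝ := supNorm h with hM0def
  set M1 : ℝ := supNorm h' with hM1def
  set M2 : ℝ := supNorm h'' with hM2def
  have hM0 : 0 ≤ M0 := supNorm_nonneg hcont0
  have hM1 : 0 ≤ M1 := supNorm_nonneg hcont1
  have hM2 : 0 ≤ M2 := supNorm_nonneg hcont2
  have hpiM0 : 0 ≤ Real.pi * M0 := mul_nonneg hpi.le hM0
  have hpiM1 : 0 ≤ Real.pi * M1 := mul_nonneg hpi.le hM1
  have hpi2M0 : 0 ≤ Real.pi ^ 2 * M0 := mul_nonneg (by positivity) hM0
  refine ⟨Real.pi * M0 + 4 * (Real.pi * M1) + 10 * (Real.pi ^ 2 * M0) + 1,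
    by linarith, ?_⟩
  set C : ℝ := Real.pi * M0 + 4 * (Real.pi * M1) + 10 * (Real.pi ^ 2 * M0) + 1 with hCdef
  have hC : 0 < C := by rw [hCdef]; linarith
  intro N hN B hB
  have hn0 : (0:ℝ) < (N:ℝ) := by exact_mod_cast hN
  have hn1 : (1:ℝ) ≤ (N:ℝ) := by exact_mod_cast hN
  have hnne : ((N:ℝ)) ≠ 0 := ne_of_gt hn0
  have hn2 : (0:ℝ) < 4 * (N:ℝ) ^ 2 := by nlinarith
  have hn3 : (0:ℝ) < 2 * (N:ℝ) := by nlinarith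
  set P : ℝ → ℝ := Ssum h N B (1 / (4 * (N:ℝ) ^ 2)) with hPdef
  set P1 : ℝ → ℝ := Ssum h' N B (2 * (N:ℝ) * (1 / (4 * (N:ℝ) ^ 2))) with hP1def
  set P2 : ℝ → ℝ :=
    Ssum h'' N B (2 * (N:ℝ) * (2 * (N:ℝ) * (1 / (4 * (N:ℝ) ^ 2)))) with hP2def
  have hP' : ∀ x, HasDerivAt P (P1 x) x := fun x =>
    Ssum_hasDerivAt N B _ D1 x
  have hP1' : ∀ x, HasDerivAt P1 (P2 x) x := fun x =>
    Ssum_hasDerivAt N B _ D2 x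
  -- bounds on P, P1, P2
  have hPb : ∀ x, |P x| ≤ M0 / (4 * (N:ℝ) ^ 2) := by
    intro x
    calc |P x| ≤ |1 / (4 * (N:ℝ) ^ 2)| * M0 := Ssum_abs_le hcont0 h1 _ hN hB x
      _ = M0 / (4 * (N:ℝ) ^ 2) := by
          rw [abs_of_pos (one_div_pos.2 hn2)]; ring
  have hP1b : ∀ x, |P1 x| ≤ M1 / (2 * (N:ℝ)) := by
    intro x
    calc |P1 x| ≤ |2 * (N:ℝ) * (1 / (4 * (N:ℝ) ^ 2))| * M1 :=
          Ssum_abs_le hcont1 hd1 _ hN hB x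
      _ = M1 / (2 * (N:ℝ)) := by
          rw [show 2 * (N:ℝ) * (1 / (4 * (N:ℝ) ^ 2)) = 1 / (2 * (N:ℝ)) by
            field_simp; ring]
          rw [abs_of_pos (one_div_pos.2 hn3)]; ring
  have hP2b : ∀ x, |P2 x| ≤ M2 := by
    intro x
    calc |P2 x| ≤ |2 * (N:ℝ) * (2 * (N:ℝ) * (1 / (4 * (N:ℝ) ^ 2)))| * M2 :=
          Ssum_abs_le hcont2 hdd1 _ hN hB x
      _ = M2 := by
          rw [show 2 * (N:ℝ) * (2 * (N:ℝ) * (1 / (4 * (N:ℝ) ^ 2))) = 1 by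
            field_simp; ring]
          simp
  -- the function and its derivatives
  set G1 : ℝ → ℝ := fun x => P1 x * (qfun x)⁻¹ - P x * q1f x * ((qfun x) ^ 2)⁻¹
    with hG1def
  set G2 : ℝ → ℝ := fun x => P2 x * (qfun x)⁻¹ - 2 * P1 x * q1f x * ((qfun x) ^ 2)⁻¹
      - P x * q2f x * ((qfun x) ^ 2)⁻¹ + 2 * P x * (q1f x) ^ 2 * ((qfun x) ^ 3)⁻¹
    with hG2def
  have hFB : fB h N B = fun x => P x * (qfun x)⁻¹ := by
    funext x
    show (∑ j ∈ Finset.range N,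
      hjfun h N j x * (B j : ℝ) / (2 * (Real.sin (Real.pi * x)) ^ 2)) = _
    rw [hPdef]
    unfold Ssum hjfun qfun
    rw [Finset.sum_mul]
    refine Finset.sum_congr rfl fun j _ => ?_
    rw [div_eq_mul_inv, div_eq_mul_inv, div_eq_mul_inv]
    ring
  have hF1 : ∀ x ∈ Icc (0:ℝ) 1, HasDerivAt (fun y => P y * (qfun y)⁻¹) (G1 x) x := by
    intro x _
    rcases lt_or_ge x (1/4) with h14 | h14
    · have hev : (fun y => P y * (qfun y)⁻¹) =ᶠ[nhds x] (fun _ => (0:ℝ)) := by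
        filter_upwards [Iio_mem_nhds h14] with y hy
        rw [hPdef, Ssum_zero_lt B _ hN hy, zero_mul]
      have hz : G1 x = 0 := by
        rw [hG1def]
        simp only [hPdef, hP1def, Ssum_zero_lt B _ hN h14]
        ring
      rw [hz]
      exact (hasDerivAt_const x 0).congr_of_eventuallyEq hev
    rcases le_or_gt x (3/4) with h34 | h34
    · have hq : qfun x ≠ 0 := by
        have := qfun_ge_one ⟨h14, h34⟩; linarith
      exact F_hasDerivAt (hP' x) hq
    · have hev : (fun y => P y * (qfun y)⁻¹) =ᶠ[nhds x] (fun _ => (0:ℝ)) := by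
        filter_upwards [Ioi_mem_nhds h34] with y hy
        rw [hPdef, Ssum_zero_gt B _ hN hy, zero_mul]
      have hz : G1 x = 0 := by
        rw [hG1def]
        simp only [hPdef, hP1def, Ssum_zero_gt B _ hN h34]
        ring
      rw [hz]
      exact (hasDerivAt_const x 0).congr_of_eventuallyEq hev
  have hG1' : ∀ x ∈ Icc (0:ℝ) 1, HasDerivAt G1 (G2 x) x := by
    intro x _
    rcases lt_or_ge x (1/4) with h14 | h14
    · have hev : G1 =ᶠ[nhds x] (fun _ => (0:ℝ)) := by
        filter_upwards [Iio_mem_nhds h14] with y hy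
        rw [hG1def]
        simp only [hPdef, hP1def, Ssum_zero_lt B _ hN hy]
        ring
      have hz : G2 x = 0 := by
        rw [hG2def]
        simp only [hPdef, hP1def, hP2def, Ssum_zero_lt B _ hN h14]
        ring
      rw [hz]
      exact (hasDerivAt_const x 0).congr_of_eventuallyEq hev
    rcases le_or_gt x (3/4) with h34 | h34
    · have hq : qfun x ≠ 0 := by
        have := qfun_ge_one ⟨h14, h34⟩; linarith
      exact G1_hasDerivAt (hP' x) (hP1' x) hq
    · have hev : G1 =ᶠ[nhds x] (fun _ => (0:ℝ)) := by
        filter_upwards [Ioi_mem_nhds h34] with y hy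
        rw [hG1def]
        simp only [hPdef, hP1def, Ssum_zero_gt B _ hN hy]
        ring
      have hz : G2 x = 0 := by
        rw [hG2def]
        simp only [hPdef, hP1def, hP2def, Ssum_zero_gt B _ hN h34]
        ring
      rw [hz]
      exact (hasDerivAt_const x 0).congr_of_eventuallyEq hev
  -- RHS nonnegativity
  have hRHS1 : 0 ≤ M1 / (2 * (N:ℝ)) + C / (N:ℝ) ^ 2 :=
    add_nonneg (div_nonneg hM1 hn3.le) (div_nonneg hC.le (by positivity))
  have hRHS2 : 0 ≤ M2 + C / (N:ℝ) :=
    add_nonneg hM2 (div_nonneg hC.le hn0.le)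
  -- pointwise bounds
  have hBnd1 : ∀ x ∈ Icc (0:ℝ) 1, |G1 x| ≤ M1 / (2 * (N:ℝ)) + C / (N:ℝ) ^ 2 := by
    intro x hx
    rcases lt_or_ge x (1/4) with h14 | h14
    · have hz : G1 x = 0 := by
        rw [hG1def]; simp only [hPdef, hP1def, Ssum_zero_lt B _ hN h14]; ring
      rw [hz, abs_zero]; exact hRHS1
    rcases le_or_gt x (3/4) with h34 | h34
    · have hq1 : 1 ≤ qfun x := qfun_ge_one ⟨h14, h34⟩
      have hq0 : 0 < qfun x := lt_of_lt_of_le one_pos hq1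
      have hi1 : (qfun x)⁻¹ ≤ 1 := inv_le_one_of_one_le₀ hq1
      have hi2 : ((qfun x) ^ 2)⁻¹ ≤ 1 := inv_le_one_of_one_le₀ (one_le_pow₀ hq1)
      have hi1n : (0:ℝ) ≤ (qfun x)⁻¹ := inv_nonneg.2 hq0.le
      have hi2n : (0:ℝ) ≤ ((qfun x) ^ 2)⁻¹ := inv_nonneg.2 (by positivity)
      have t1 : |P1 x * (qfun x)⁻¹| ≤ M1 / (2 * (N:ℝ)) := by
        rw [abs_mul, abs_inv, abs_of_pos hq0]
        calc |P1 x| * (qfun x)⁻¹ ≤ (M1 / (2 * (N:ℝ))) * 1 :=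
              mul_le_mul (hP1b x) hi1 hi1n (div_nonneg hM1 hn3.le)
          _ = M1 / (2 * (N:ℝ)) := mul_one _
      have t2 : |P x * q1f x * ((qfun x) ^ 2)⁻¹| ≤ M0 / (4 * (N:ℝ) ^ 2) * (4 * Real.pi) := by
        rw [abs_mul, abs_mul, abs_inv, abs_of_pos (by positivity : (0:ℝ) < (qfun x) ^ 2)]
        calc |P x| * |q1f x| * ((qfun x) ^ 2)⁻¹
            ≤ (M0 / (4 * (N:ℝ) ^ 2) * (4 * Real.pi)) * 1 := by
              refine mul_le_mul ?_ hi2 hi2n (by positivity)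
              exact mul_le_mul (hPb x) (q1f_abs_le x) (abs_nonneg _)
                (div_nonneg hM0 hn2.le)
          _ = M0 / (4 * (N:ℝ) ^ 2) * (4 * Real.pi) := mul_one _
      have tri : |G1 x| ≤ |P1 x * (qfun x)⁻¹| + |P x * q1f x * ((qfun x) ^ 2)⁻¹| := by
        rw [hG1def]
        exact abs_sub _ _
      have harith : M0 / (4 * (N:ℝ) ^ 2) * (4 * Real.pi) ≤ C / (N:ℝ) ^ 2 := by
        rw [show M0 / (4 * (N:ℝ) ^ 2) * (4 * Real.pi) = (Real.pi * M0) / (N:ℝ) ^ 2 by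
          field_simp]
        gcongr
        rw [hCdef]; linarith
      linarith [tri, t1, t2, harith]
    · have hz : G1 x = 0 := by
        rw [hG1def]; simp only [hPdef, hP1def, Ssum_zero_gt B _ hN h34]; ring
      rw [hz, abs_zero]; exact hRHS1
  have hBnd2 : ∀ x ∈ Icc (0:ℝ) 1, |G2 x| ≤ M2 + C / (N:ℝ) := by
    intro x hx
    rcases lt_or_ge x (1/4) with h14 | h14
    · have hz : G2 x = 0 := by
        rw [hG2def]; simp only [hPdef, hP1def, hP2def, Ssum_zero_lt B _ hN h14]; ring
      rw [hz, abs_zero]; exact hRHS2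
    rcases le_or_gt x (3/4) with h34 | h34
    · have hq1 : 1 ≤ qfun x := qfun_ge_one ⟨h14, h34⟩
      have hq0 : 0 < qfun x := lt_of_lt_of_le one_pos hq1
      have hi1 : (qfun x)⁻¹ ≤ 1 := inv_le_one_of_one_le₀ hq1
      have hi2 : ((qfun x) ^ 2)⁻¹ ≤ 1 := inv_le_one_of_one_le₀ (one_le_pow₀ hq1)
      have hi3 : ((qfun x) ^ 3)⁻¹ ≤ 1 := inv_le_one_of_one_le₀ (one_le_pow₀ hq1)
      have hi1n : (0:ℝ) ≤ (qfun x)⁻¹ := inv_nonneg.2 hq0.le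
      have hi2n : (0:ℝ) ≤ ((qfun x) ^ 2)⁻¹ := inv_nonneg.2 (by positivity)
      have hi3n : (0:ℝ) ≤ ((qfun x) ^ 3)⁻¹ := inv_nonneg.2 (by positivity)
      have t1 : |P2 x * (qfun x)⁻¹| ≤ M2 := by
        rw [abs_mul, abs_inv, abs_of_pos hq0]
        calc |P2 x| * (qfun x)⁻¹ ≤ M2 * 1 := mul_le_mul (hP2b x) hi1 hi1n hM2
          _ = M2 := mul_one _
      have t2 : |2 * P1 x * q1f x * ((qfun x) ^ 2)⁻¹| ≤
          2 * (M1 / (2 * (N:ℝ))) * (4 * Real.pi) := by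
        rw [abs_mul, abs_mul, abs_mul, abs_inv,
          abs_of_pos (by positivity : (0:ℝ) < (qfun x) ^ 2), abs_two]
        calc 2 * |P1 x| * |q1f x| * ((qfun x) ^ 2)⁻¹
            ≤ (2 * (M1 / (2 * (N:ℝ))) * (4 * Real.pi)) * 1 := by
              refine mul_le_mul ?_ hi2 hi2n (by positivity)
              refine mul_le_mul ?_ (q1f_abs_le x) (abs_nonneg _) (by positivity)
              exact mul_le_mul_of_nonneg_left (hP1b x) (by norm_num)
          _ = 2 * (M1 / (2 * (N:ℝ))) * (4 * Real.pi) := mul_one _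
      have t3 : |P x * q2f x * ((qfun x) ^ 2)⁻¹| ≤
          M0 / (4 * (N:ℝ) ^ 2) * (8 * Real.pi ^ 2) := by
        rw [abs_mul, abs_mul, abs_inv,
          abs_of_pos (by positivity : (0:ℝ) < (qfun x) ^ 2)]
        calc |P x| * |q2f x| * ((qfun x) ^ 2)⁻¹
            ≤ (M0 / (4 * (N:ℝ) ^ 2) * (8 * Real.pi ^ 2)) * 1 := by
              refine mul_le_mul ?_ hi2 hi2n (by positivity)
              exact mul_le_mul (hPb x) (q2f_abs_le x) (abs_nonneg _)
                (div_nonneg hM0 hn2.le)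
          _ = M0 / (4 * (N:ℝ) ^ 2) * (8 * Real.pi ^ 2) := mul_one _
      have hq1sq : |(q1f x) ^ 2| ≤ (4 * Real.pi) ^ 2 := by
        rw [abs_pow]
        exact pow_le_pow_left₀ (abs_nonneg _) (q1f_abs_le x) 2
      have t4 : |2 * P x * (q1f x) ^ 2 * ((qfun x) ^ 3)⁻¹| ≤
          2 * (M0 / (4 * (N:ℝ) ^ 2)) * (4 * Real.pi) ^ 2 := by
        rw [abs_mul, abs_mul, abs_mul, abs_inv,
          abs_of_pos (by positivity : (0:ℝ) < (qfun x) ^ 3), abs_two]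
        calc 2 * |P x| * |(q1f x) ^ 2| * ((qfun x) ^ 3)⁻¹
            ≤ (2 * (M0 / (4 * (N:ℝ) ^ 2)) * (4 * Real.pi) ^ 2) * 1 := by
              refine mul_le_mul ?_ hi3 hi3n (by positivity)
              refine mul_le_mul ?_ hq1sq (abs_nonneg _) (by positivity)
              exact mul_le_mul_of_nonneg_left (hPb x) (by norm_num)
          _ = 2 * (M0 / (4 * (N:ℝ) ^ 2)) * (4 * Real.pi) ^ 2 := mul_one _
      have tri : |G2 x| ≤ |P2 x * (qfun x)⁻¹| + |2 * P1 x * q1f x * ((qfun x) ^ 2)⁻¹|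
          + |P x * q2f x * ((qfun x) ^ 2)⁻¹| + |2 * P x * (q1f x) ^ 2 * ((qfun x) ^ 3)⁻¹| := by
        rw [hG2def]
        calc |P2 x * (qfun x)⁻¹ - 2 * P1 x * q1f x * ((qfun x) ^ 2)⁻¹
              - P x * q2f x * ((qfun x) ^ 2)⁻¹ + 2 * P x * (q1f x) ^ 2 * ((qfun x) ^ 3)⁻¹|
            ≤ |P2 x * (qfun x)⁻¹ - 2 * P1 x * q1f x * ((qfun x) ^ 2)⁻¹
              - P x * q2f x * ((qfun x) ^ 2)⁻¹| + |2 * P x * (q1f x) ^ 2 * ((qfun x) ^ 3)⁻¹| :=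
              abs_add_le _ _
          _ ≤ |P2 x * (qfun x)⁻¹ - 2 * P1 x * q1f x * ((qfun x) ^ 2)⁻¹|
              + |P x * q2f x * ((qfun x) ^ 2)⁻¹| + |2 * P x * (q1f x) ^ 2 * ((qfun x) ^ 3)⁻¹| := by
              have := abs_sub (P2 x * (qfun x)⁻¹ - 2 * P1 x * q1f x * ((qfun x) ^ 2)⁻¹)
                (P x * q2f x * ((qfun x) ^ 2)⁻¹)
              linarith
          _ ≤ _ := by
              have := abs_sub (P2 x * (qfun x)⁻¹) (2 * P1 x * q1f x * ((qfun x) ^ 2)⁻¹)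
              linarith
      have harith : 2 * (M1 / (2 * (N:ℝ))) * (4 * Real.pi)
          + M0 / (4 * (N:ℝ) ^ 2) * (8 * Real.pi ^ 2)
          + 2 * (M0 / (4 * (N:ℝ) ^ 2)) * (4 * Real.pi) ^ 2 ≤ C / (N:ℝ) := by
        rw [show 2 * (M1 / (2 * (N:ℝ))) * (4 * Real.pi)
            + M0 / (4 * (N:ℝ) ^ 2) * (8 * Real.pi ^ 2)
            + 2 * (M0 / (4 * (N:ℝ) ^ 2)) * (4 * Real.pi) ^ 2
            = (4 * (Real.pi * M1) + 10 * (Real.pi ^ 2 * M0) / (N:ℝ)) / (N:ℝ) by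
          field_simp; ring]
        gcongr
        have hd : 10 * (Real.pi ^ 2 * M0) / (N:ℝ) ≤ 10 * (Real.pi ^ 2 * M0) := by
          rw [div_le_iff₀ hn0]
          have h10 : (0:ℝ) ≤ 10 * (Real.pi ^ 2 * M0) := by linarith
          have := mul_le_mul_of_nonneg_left hn1 h10
          linarith
        rw [hCdef]; linarith
      linarith [tri, t1, t2, t3, t4, harith]
    · have hz : G2 x = 0 := by
        rw [hG2def]; simp only [hPdef, hP1def, hP2def, Ssum_zero_gt B _ hN h34]; ring
      rw [hz, abs_zero]; exact hRHS2
  -- identification of derivWithin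
  have hUD : UniqueDiffOn ℝ (Icc (0:ℝ) 1) := uniqueDiffOn_Icc one_pos
  have hD1eq : ∀ x ∈ Icc (0:ℝ) 1, derivWithin (fB h N B) (Icc 0 1) x = G1 x := by
    intro x hx
    rw [hFB]
    exact ((hF1 x hx).hasDerivWithinAt).derivWithin (hUD x hx)
  constructor
  · refine Real.iSup_le (fun z => ?_) hRHS1
    rw [hD1eq z z.2]
    exact hBnd1 z z.2
  · refine Real.iSup_le (fun z => ?_) hRHS2
    have e1 : derivWithin (derivWithin (fB h N B) (Icc 0 1)) (Icc 0 1) (z:ℝ)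
        = derivWithin G1 (Icc 0 1) (z:ℝ) :=
      derivWithin_congr (fun y hy => hD1eq y hy) (hD1eq z z.2)
    have e2 : derivWithin G1 (Icc 0 1) (z:ℝ) = G2 z :=
      ((hG1' z z.2).hasDerivWithinAt).derivWithin (hUD z z.2)
    rw [e1, e2]
    exact hBnd2 z z.2
end
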